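/- For 0 ≤ k ≤ (n-1)/2, the incomplete q-Chebyshev polynomials of the first kind satisfy the recurrence T_{n+2}^{k+1}(x,s,q) = (1+q^{n+1}) x T_{n+1}^{k+1}(x,s,q) + q^{n+1} s T_n^k(x,s,q). -/

import Mathlib

/-- q-integer [n]_q = (1-q^n)/(1-q). -/
noncomputable def qint (q : ℂ) (n : ℕ) : ℂ := (1 - q ^ n) / (1 - q)

/-- q-factorial [n]_q!. -/
noncomputable def qfact (q : ℂ) (n : ℕ) : ℂ := ∏ i ∈ Finset.range n, qint q (i + 1)

/-- Gaussian (q-binomial) coefficient, 0 for k > n. -/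
noncomputable def qbinom (q : ℂ) (n k : ℕ) : ℂ :=
  if k ≤ n then qfact q n / (qfact q (n - k) * qfact q k) else 0

/-- q-shifted factorial (x;q)_n. -/
noncomputable def qpoch (x q : ℂ) (n : ℕ) : ℂ := ∏ i ∈ Finset.range n, (1 - q ^ i * x)

/-- Partial sum defining incomplete q-Chebyshev polynomials of the second kind:
`Usum x s q n (k+1)` is U_n^k(x,s,q), and `Usum x s q n 0 = 0` is the empty sum (k = -1). -/
noncomputable def Usum (x s q : ℂ) (n m : ℕ) : ℂ :=
  ∑ j ∈ Finset.range m,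
    q ^ (j ^ 2) * qbinom q (n - j) j * (qpoch (-q) q (n - j) / qpoch (-q) q j) *
      s ^ j * x ^ (n - 2 * j)

/-- Partial sum defining incomplete q-Chebyshev polynomials of the first kind:
`Tsum x s q n (k+1)` is T_n^k(x,s,q). -/
noncomputable def Tsum (x s q : ℂ) (n m : ℕ) : ℂ :=
  ∑ j ∈ Finset.range m,
    q ^ (j ^ 2) * (qint q n / qint q (n - j)) * qbinom q (n - j) j *
      (qpoch (-q) q (n - j - 1) / qpoch (-q) q j) * s ^ j * x ^ (n - 2 * j)

/-!
The recurrence holds coefficient by coefficient. The constant terms `(-q; q)_(n + 1)` and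
`(-q; q)_n` differ by the factor `1 + q ^ (n + 1)`. For `j ≤ k` the coefficients of
`s ^ (j + 1) x ^ (n - 2j)` are, in closed form,
`q^(j²) [n] [n-j-1]! (-q;q)_(n-j-1) / ([n-2j]! [j]! (-q;q)_j)` with shifted indices, so they
share one factor; removing it leaves an identity between q-integers, checked by clearing
denominators. The bound `2k + 1 ≤ n` keeps every `n - 2j` from truncating.
-/

open Finset

lemma one_sub_pow_ne_zero_of_norm_lt_one {q : ℂ} (hq : ‖q‖ < 1) {m : ℕ} (hm : m ≠ 0) :
    1 - q ^ m ≠ 0 := by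
  have h : ‖q ^ m‖ < 1 := by rw [norm_pow]; exact pow_lt_one₀ (norm_nonneg q) hq hm
  intro h0
  rw [← sub_eq_zero.mp h0, norm_one] at h
  exact h.false

lemma one_add_pow_ne_zero_of_norm_lt_one {q : ℂ} (hq : ‖q‖ < 1) {m : ℕ} (hm : m ≠ 0) :
    1 + q ^ m ≠ 0 := by
  have h : ‖q ^ m‖ < 1 := by rw [norm_pow]; exact pow_lt_one₀ (norm_nonneg q) hq hm
  intro h0
  rw [eq_neg_of_add_eq_zero_right h0, norm_neg, norm_one] at h
  exact h.false

lemma qint_ne_zero {q : ℂ} (hq : ‖q‖ < 1) {m : ℕ} (hm : m ≠ 0) : qint q m ≠ 0 :=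
  div_ne_zero (one_sub_pow_ne_zero_of_norm_lt_one hq hm)
    (by simpa using one_sub_pow_ne_zero_of_norm_lt_one hq one_ne_zero)

lemma qfact_ne_zero {q : ℂ} (hq : ‖q‖ < 1) (m : ℕ) : qfact q m ≠ 0 :=
  prod_ne_zero_iff.mpr fun i _ => qint_ne_zero hq i.succ_ne_zero

lemma qpoch_neg_ne_zero {q : ℂ} (hq : ‖q‖ < 1) (m : ℕ) : qpoch (-q) q m ≠ 0 :=
  prod_ne_zero_iff.mpr fun i _ => by
    simpa [pow_succ] using one_add_pow_ne_zero_of_norm_lt_one hq i.succ_ne_zero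

lemma qfact_succ (q : ℂ) (m : ℕ) : qfact q (m + 1) = qfact q m * qint q (m + 1) :=
  prod_range_succ _ _

lemma qpoch_neg_succ (q : ℂ) (m : ℕ) :
    qpoch (-q) q (m + 1) = qpoch (-q) q m * (1 + q ^ (m + 1)) := by
  rw [qpoch, prod_range_succ, ← qpoch, pow_succ]
  ring

noncomputable def Tcoeff (q : ℂ) (n j : ℕ) : ℂ :=
  q ^ (j ^ 2) * (qint q n / qint q (n - j)) * qbinom q (n - j) j *
    (qpoch (-q) q (n - j - 1) / qpoch (-q) q j)

lemma Tsum_eq_sum_Tcoeff (x s q : ℂ) (n m : ℕ) :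
    Tsum x s q n m = ∑ j ∈ range m, Tcoeff q n j * s ^ j * x ^ (n - 2 * j) :=
  rfl

lemma Tcoeff_eq {q : ℂ} (hq : ‖q‖ < 1) {n j : ℕ} (hj : 2 * j ≤ n) (hjn : j < n) :
    Tcoeff q n j = q ^ (j ^ 2) * qint q n * qfact q (n - j - 1) * qpoch (-q) q (n - j - 1) /
      (qfact q (n - 2 * j) * qfact q j * qpoch (-q) q j) := by
  obtain ⟨r, hr⟩ : ∃ r, n - j = r + 1 := ⟨n - j - 1, by omega⟩
  have hsub : n - j - j = n - 2 * j := by omega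
  rw [Tcoeff, qbinom, if_pos (by omega), hr, qfact_succ, Nat.add_sub_cancel, ← hr, hsub, hr]
  have := qint_ne_zero hq r.succ_ne_zero
  have := qfact_ne_zero hq (n - 2 * j)
  have := qfact_ne_zero hq j
  have := qpoch_neg_ne_zero hq j
  field_simp

lemma Tcoeff_zero {q : ℂ} (hq : ‖q‖ < 1) (m : ℕ) : Tcoeff q (m + 1) 0 = qpoch (-q) q m := by
  rw [Tcoeff_eq hq (by omega) (by omega)]
  simp only [Nat.sub_zero, Nat.add_sub_cancel, mul_zero, qfact_succ, sq, pow_zero, one_mul]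
  have hfact0 : qfact q 0 = 1 := prod_range_zero _
  have hpoch0 : qpoch (-q) q 0 = 1 := prod_range_zero _
  have := qint_ne_zero hq m.succ_ne_zero
  have := qfact_ne_zero hq m
  rw [hfact0, hpoch0]
  field_simp

/-- `Tcoeff_rec` for `n = 2j + 1 + t`, divided by the common factor
`q ^ j² * [j + t]! * (-q; q)_(j + t) / ([t + 1]! * [j + 1]! * (-q; q)_(j + 1))`. -/
lemma Tcoeff_rec_normalized {q : ℂ} (hq : q ≠ 1) (j t : ℕ) :
    q ^ (2 * j + 1) * qint q (2 * j + 1 + t + 2) * qint q (j + t + 1) * (1 + q ^ (j + t + 1)) =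
      (1 + q ^ (2 * j + 1 + t + 1)) * q ^ (2 * j + 1) * qint q (2 * j + 1 + t + 1) *
          qint q (t + 1) +
        q ^ (2 * j + 1 + t + 1) * qint q (2 * j + 1 + t) * qint q (j + 1) * (1 + q ^ (j + 1)) := by
  have : 1 - q ≠ 0 := sub_ne_zero.mpr hq.symm
  simp only [qint]
  field_simp
  ring

lemma Tcoeff_rec {q : ℂ} (hq : ‖q‖ < 1) {n j : ℕ} (hj : 2 * j + 1 ≤ n) :
    Tcoeff q (n + 2) (j + 1) = (1 + q ^ (n + 1)) * Tcoeff q (n + 1) (j + 1) +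
      q ^ (n + 1) * Tcoeff q n j := by
  obtain ⟨t, rfl⟩ : ∃ t, n = 2 * j + 1 + t := ⟨n - (2 * j + 1), by omega⟩
  rw [Tcoeff_eq hq (by omega) (by omega), Tcoeff_eq hq (by omega) (by omega),
    Tcoeff_eq hq (by omega) (by omega)]
  obtain ⟨e1, e2, e3, e4, e5, e6⟩ : 2 * j + 1 + t + 2 - (j + 1) - 1 = j + t + 1 ∧
      2 * j + 1 + t + 2 - 2 * (j + 1) = t + 1 ∧ 2 * j + 1 + t + 1 - (j + 1) - 1 = j + t ∧
      2 * j + 1 + t + 1 - 2 * (j + 1) = t ∧ 2 * j + 1 + t - j - 1 = j + t ∧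
      2 * j + 1 + t - 2 * j = t + 1 := by omega
  rw [e1, e2, e3, e4, e5, e6, qfact_succ, qfact_succ, qfact_succ, qpoch_neg_succ,
    qpoch_neg_succ]
  have := qfact_ne_zero hq t
  have := qfact_ne_zero hq j
  have := qpoch_neg_ne_zero hq j
  have := qint_ne_zero hq t.succ_ne_zero
  have := qint_ne_zero hq j.succ_ne_zero
  have := one_add_pow_ne_zero_of_norm_lt_one hq j.succ_ne_zero
  have hq_ne_one : q ≠ 1 := by rintro rfl; simp at hq
  field_simp
  linear_combination
    (q ^ (j ^ 2) * qfact q (j + t) * qpoch (-q) q (j + t)) * Tcoeff_rec_normalized hq_ne_one j t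

theorem Tinc_rec_general (q : ℂ) (hq1 : ‖q‖ < 1)
    (x s : ℂ) (n k : ℕ) (hk : 2 * k + 1 ≤ n) :
    Tsum x s q (n + 2) (k + 2) =
      (1 + q ^ (n + 1)) * x * Tsum x s q (n + 1) (k + 2) +
        q ^ (n + 1) * s * Tsum x s q n (k + 1) := by
  have hterm : ∀ j ∈ range (k + 1),
      Tcoeff q (n + 2) (j + 1) * s ^ (j + 1) * x ^ (n + 2 - 2 * (j + 1)) =
        (1 + q ^ (n + 1)) * x *
            (Tcoeff q (n + 1) (j + 1) * s ^ (j + 1) * x ^ (n + 1 - 2 * (j + 1))) +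
          q ^ (n + 1) * s * (Tcoeff q n j * s ^ j * x ^ (n - 2 * j)) := by
    intro j hj
    have hjn : 2 * j + 1 ≤ n := by rw [mem_range] at hj; omega
    obtain ⟨e1, e2⟩ :
        n + 2 - 2 * (j + 1) = n - 2 * j ∧ n - 2 * j = n + 1 - 2 * (j + 1) + 1 := by omega
    rw [Tcoeff_rec hq1 hjn, e1, e2, pow_succ s, pow_succ x]
    ring
  simp only [Tsum_eq_sum_Tcoeff]
  rw [sum_range_succ' _ (k + 1), sum_range_succ' _ (k + 1), sum_congr rfl hterm, sum_add_distrib,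
    ← mul_sum, ← mul_sum, Tcoeff_zero hq1, Tcoeff_zero hq1, qpoch_neg_succ]
  simp only [mul_zero, Nat.sub_zero, pow_zero, mul_one]
  ring

theorem Tinc_rec (q : ℂ) (hq0 : 0 < ‖q‖) (hq1 : ‖q‖ < 1)
    (x s : ℂ) (n k : ℕ) (hk : 2 * k + 1 ≤ n) :
    Tsum x s q (n + 2) (k + 2) =
      (1 + q ^ (n + 1)) * x * Tsum x s q (n + 1) (k + 2) +
        q ^ (n + 1) * s * Tsum x s q n (k + 1) :=
  Tinc_rec_general q hq1 x s n k hk
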